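/- arXiv:2203.00673 — 3 statements merged into one kernel-verified Lean document; each statement's English description precedes it below -/
import Mathlib

section
/- If two worlds of many-logic modal structures (over the same base lattice L) are related by a bisimulation, then every modal formula receives the same value at both worlds: v_w(φ) = v_{w'}(φ). -/
/-- Down-interpretation of a value `a` of the base complete lattice `L` into
the (complete) sublattice `S`: the supremum of the elements of `S` below `a`. -/
def dInterp {L : Type*} [CompleteLattice L] (S : Set L) (a : L) : L :=
  sSup {x ∈ S | x ≤ a}

/-- Modal propositional formulas with conjunction, disjunction, negation, box. -/
inductive MForm : Type
  | var : ℕ → MForm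
  | neg : MForm → MForm
  | or : MForm → MForm → MForm
  | and : MForm → MForm → MForm
  | box : MForm → MForm

/-- A many-logic modal `L`-structure: each world carries a (complete)
sublattice of `L`, with accessibility relation `R` and an assignment `s` of
values (in the world's sublattice) to propositional variables.  The unary
operation `c` on `L` is the complement of the base lattice. -/
structure MLStructure (L : Type*) [CompleteLattice L] (c : L → L) where
  W : Type*
  lat : W → Set L
  R : W → W → Prop
  s : W → ℕ → L
  s_mem : ∀ w n, s w n ∈ lat w

/-- The valuation of formulas at worlds of a many-logic modal structure. -/
def MLStructure.val {L : Type*} [CompleteLattice L] {c : L → L}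
    (M : MLStructure L c) : MForm → M.W → L
  | .var n, w => M.s w n
  | .neg φ, w => dInterp (M.lat w) (c (M.val φ w))
  | .or φ ψ, w => dInterp (M.lat w) (M.val φ w ⊔ M.val ψ w)
  | .and φ ψ, w => dInterp (M.lat w) (M.val φ w ⊓ M.val ψ w)
  | .box φ, w => sInf {y | ∃ u, M.R w u ∧ y = dInterp (M.lat w) (M.val φ u)}

/-- Bisimulation between two many-logic modal structures over the same base
lattice: related worlds carry the same sublattice, agree on propositional
variables, and satisfy the zig and zag conditions. -/
def IsBisim {L : Type*} [CompleteLattice L] {c : L → L}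
    (M M' : MLStructure L c) (B : M.W → M'.W → Prop) : Prop :=
  ∀ w w', B w w' →
    M.lat w = M'.lat w' ∧
    (∀ n, M.s w n = M'.s w' n) ∧
    (∀ u, M.R w u → ∃ u', M'.R w' u' ∧ M.lat u = M'.lat u' ∧ B u u') ∧
    (∀ u', M'.R w' u' → ∃ u, M.R w u ∧ M.lat u = M'.lat u' ∧ B u u')

theorem Set.image_eq_image_of_zig_zag {α β γ : Type*} {s : Set α} {t : Set β}
    {f : α → γ} {g : β → γ} (B : α → β → Prop) (hfg : ∀ a b, B a b → f a = g b)
    (zig : ∀ a ∈ s, ∃ b ∈ t, B a b) (zag : ∀ b ∈ t, ∃ a ∈ s, B a b) :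
    f '' s = g '' t := by
  ext y
  constructor
  · rintro ⟨a, ha, rfl⟩
    obtain ⟨b, hb, hab⟩ := zig a ha
    exact ⟨b, hb, (hfg a b hab).symm⟩
  · rintro ⟨b, hb, rfl⟩
    obtain ⟨a, ha, hab⟩ := zag b hb
    exact ⟨a, ha, hfg a b hab⟩

theorem MLStructure.val_box {L : Type*} [CompleteLattice L] {c : L → L}
    (M : MLStructure L c) (φ : MForm) (w : M.W) :
    M.val (.box φ) w = sInf ((fun u => dInterp (M.lat w) (M.val φ u)) '' {u | M.R w u}) := by
  simp only [MLStructure.val, Set.image, Set.mem_ofPred_eq, eq_comm]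

/-- bisimilar worlds of many-logic modal structures over a common
base lattice assign the same value to every modal formula. -/
theorem bisim_val_eq {L : Type*} [CompleteLattice L] {c : L → L}
    (M M' : MLStructure L c) (B : M.W → M'.W → Prop)
    (hB : IsBisim M M' B) (w : M.W) (w' : M'.W) (hww' : B w w') :
    ∀ φ : MForm, M.val φ w = M'.val φ w' := by
  intro φ
  induction φ generalizing w w' with
  | var n => exact (hB w w' hww').2.1 n
  | neg φ ih => simp only [MLStructure.val, (hB w w' hww').1, ih w w' hww']
  | or φ ψ ihφ ihψ =>
    simp only [MLStructure.val, (hB w w' hww').1, ihφ w w' hww', ihψ w w' hww']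
  | and φ ψ ihφ ihψ =>
    simp only [MLStructure.val, (hB w w' hww').1, ihφ w w' hww', ihψ w w' hww']
  | box φ ih =>
    obtain ⟨hlat, -, zig, zag⟩ := hB w w' hww'
    rw [M.val_box, M'.val_box, hlat]
    congr 1
    exact Set.image_eq_image_of_zig_zag B (fun u u' h => by rw [ih u u' h])
      (fun u hu => (zig u hu).imp fun _ ⟨hu', _, h⟩ => ⟨hu', h⟩)
      (fun u' hu' => (zag u' hu').imp fun _ ⟨hu, _, h⟩ => ⟨hu, h⟩)
end

section
/- There exists a many-logic modal structure over a three-element chain L = {0 < 1' < 1} with filter F = {1, 1'} in which a world w validates α and every world accessed by w validates α, yet w does not validate □α; specifically, with sublattice A = {0,1} at w, accessibility w R w and w R w', values v_w(α)=1 and v_{w'}(α)=1', one gets v_w(□α) = 0 ∉ F. -/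
section dInterp

variable {L : Type*} [CompleteLattice L] {S : Set L} {a : L}

theorem dInterp_of_mem (ha : a ∈ S) : dInterp S a = a :=
  le_antisymm (sSup_le fun _ hx => hx.2) (le_sSup ⟨ha, le_rfl⟩)

theorem dInterp_eq_bot_iff : dInterp S a = ⊥ ↔ ∀ x ∈ S, x ≤ a → x = ⊥ := by
  simp only [dInterp, sSup_eq_bot, Set.mem_ofPred_eq, and_imp]

end dInterp

/-- over the three-element chain `Fin 3` (`0 < 1 < 2`, i.e.
`0 < 1' < 1`) with filter `F = {2, 1}` (`= {1, 1'}`), the world `w` carrying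
the sublattice `A = {0, 2}` with `v_w(α) = 2` which accesses itself and a
world `w'` carrying the full chain with `v_{w'}(α) = 1` satisfies `α`, and so
does every accessed world, yet `v_w(□α) = dInterp A 2 ⊓ dInterp A 1 = 0 ∉ F`:
`w` does not validate `□α`. -/
theorem nec_fails_though_true_everywhere :
    (2 : Fin 3) ∈ ({2, 1} : Set (Fin 3)) ∧
    (1 : Fin 3) ∈ ({2, 1} : Set (Fin 3)) ∧
    dInterp ({0, 2} : Set (Fin 3)) 2 ⊓ dInterp ({0, 2} : Set (Fin 3)) 1 = 0 ∧
    dInterp ({0, 2} : Set (Fin 3)) 2 ⊓ dInterp ({0, 2} : Set (Fin 3)) 1 ∉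
      ({2, 1} : Set (Fin 3)) := by
  have top_fixed : dInterp ({0, 2} : Set (Fin 3)) 2 = 2 := dInterp_of_mem (by simp)
  have mid_collapses : dInterp ({0, 2} : Set (Fin 3)) 1 = 0 :=
    (dInterp_eq_bot_iff.2 (by simp [bot_eq_zero])).trans bot_eq_zero
  rw [top_fixed, mid_collapses]
  refine ⟨by simp, by simp, by decide, by decide⟩
end

section
/- In the many-logic structure over the four-element lattice of the Logic of Paradox LP (values {F} < {V,F}, {} < {V}, with {V,F} and {} incomparable, negation fixing {V,F} and {} and swapping {V},{F}), a world w carrying the sublattice CL = {{F},{V}} that accesses a world w' carrying LP with v_{w'}(α) = {V,F} satisfies v_w(□α) = {F}: even though both α and ¬α hold at w' (filter = designated values containing {V} and {V,F}), □α fails at w. -/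
open OrderDual

/-- The four-valued lattice of the Logic of Paradox under the truth ordering:
a pair `(v, f)` records membership of `V` and of `F`, with
`(v,f) ≤ (v',f')` iff `v → v'` and `f' → f`. -/
abbrev LPv : Type := Prop × Propᵒᵈ

/-- LP negation: swap the `V`- and `F`-components. -/
def lpneg (p : LPv) : LPv := (ofDual p.2, toDual p.1)

/-- The value `{V, F}`. -/
def vTF : LPv := (True, toDual True)
/-- The value `{F}`. -/
def vF : LPv := (False, toDual True)
/-- The value `{V}`. -/
def vV : LPv := (True, toDual False)

/-- Designated values of LP: `{V}` and `{V, F}`. -/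
def Des : Set LPv := {vV, vTF}

theorem dInterp_pair_of_le_of_not_le {L : Type*} [CompleteLattice L] {a b c : L}
    (hb : b ≤ a) (hc : ¬c ≤ a) : dInterp {b, c} a = b := by
  have below : {x ∈ ({b, c} : Set L) | x ≤ a} = {b} := by
    ext x
    constructor
    · rintro ⟨rfl | rfl, hx⟩
      · rfl
      · exact absurd hx hc
    · rintro rfl
      exact ⟨Or.inl rfl, hb⟩
  rw [dInterp, below, sSup_singleton]

theorem lpneg_vTF : lpneg vTF = vTF := rfl

theorem vF_le_vTF : vF ≤ vTF :=
  ⟨False.elim, le_rfl⟩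

-- `x ≤ {V, F}` forces `F ∈ x`, so `{V}` is not below `{V, F}` although `{V} ⊆ {V, F}`.
theorem vV_not_le_vTF : ¬vV ≤ vTF :=
  fun h => (h.2 : toDual False ≤ toDual True) trivial

theorem vTF_mem_Des : vTF ∈ Des := Or.inr rfl

theorem vF_not_mem_Des : vF ∉ Des := by
  rintro (h | h) <;> exact (congrArg (fun p : LPv => p.1) h).mpr trivial

/-- a world `w` carrying the classical sublattice
`CL = {{F}, {V}}` accessing a world `w'` carrying full LP with
`v_{w'}(α) = {V,F}` has `v_w(□α) = {F}`: both `α` and `¬α` hold at `w'`,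
yet `□α` fails at `w`. -/
theorem box_fails_from_paradoxical :
    vTF ∈ Des ∧ lpneg vTF ∈ Des ∧
    dInterp ({vF, vV} : Set LPv) vTF = vF ∧
    dInterp ({vF, vV} : Set LPv) vTF ∉ Des := by
  have hbox : dInterp ({vF, vV} : Set LPv) vTF = vF :=
    dInterp_pair_of_le_of_not_le vF_le_vTF vV_not_le_vTF
  exact ⟨vTF_mem_Des, lpneg_vTF ▸ vTF_mem_Des, hbox, hbox.symm ▸ vF_not_mem_Des⟩
end
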